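/- Let R be a ring. Then R is an exchange UJ# ring whose Jacobson radical J(R) is nil if and only if R is strongly nil-clean, i.e., for every a ∈ R there exist an idempotent e and a nilpotent q with a = e + q and e q = q e. -/

import Mathlib

/-- `J#(R)`: the set of elements `z` such that `z ^ n` lies in the Jacobson radical
(the intersection of the maximal left ideals) for some `n ≥ 1`. -/
def Jsharp (R : Type*) [Ring R] : Set R :=
  {z : R | ∃ n : ℕ, 1 ≤ n ∧ z ^ n ∈ Ideal.jacobson (⊥ : Ideal R)}

/-- A ring is a `UJ#` ring if `u - 1 ∈ J#(R)` for every unit `u`. -/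
def IsUJsharp (R : Type*) [Ring R] : Prop :=
  ∀ u : Rˣ, ((u : R) - 1) ∈ Jsharp R

/-- A ring is an exchange ring if for every element `a` there is an idempotent
`e ∈ Ra` with `1 - e ∈ R(1 - a)`. -/
def IsExchange (R : Type*) [Ring R] : Prop :=
  ∀ a : R, ∃ e : R, IsIdempotentElem e ∧ e ∈ Ideal.span {a} ∧ 1 - e ∈ Ideal.span {1 - a}

/-
Strongly nil-clean rings are exactly the rings in which every `a - a²` is nilpotent: given
that, `e = 1 - (1 - a ^ N) ^ N` is an idempotent polynomial in `a` with `a - e` nilpotent,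
`e ∈ Ra` and `1 - e ∈ R(1 - a)`. Such rings are exchange rings whose units are unipotent and
whose radical is nil.

Conversely, UJ# with a nil radical makes every unit unipotent, and then also every unit of
`R / J(R)`, since units lift modulo the radical. In an exchange ring with unipotent units every
square-zero `q` lies in the radical: a nonzero idempotent in `Rq` would produce `2 × 2` matrix
units, and with them a unit that is not unipotent. Hence `R / J(R)` is reduced; its idempotents
are central and its units trivial, which forces the exchange idempotent of each `a` to be `a`
itself. So `R / J(R)` is Boolean, and `a - a²` lies in the nil ideal `J(R)`.
-/

open Polynomial

/-- The UU rings of Călugăreanu and Danchev–Lam. -/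
def IsUU (R : Type*) [Ring R] : Prop :=
  ∀ u : Rˣ, IsNilpotent ((u : R) - 1)

def IsStronglyNilClean (R : Type*) [Ring R] : Prop :=
  ∀ a : R, ∃ e q : R, IsIdempotentElem e ∧ IsNilpotent q ∧ a = e + q ∧ e * q = q * e

section CommRing

variable {A : Type*} [CommRing A] (x : A) {n : ℕ}

theorem dvd_one_sub_one_sub_pow_pow (hn : n ≠ 0) : x ∣ 1 - (1 - x ^ n) ^ n := by
  have h := sub_dvd_pow_sub_pow (1 - x ^ n) 1 n
  rw [one_pow, sub_sub_cancel_left, neg_dvd] at h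
  rw [← dvd_neg, neg_sub]
  exact (dvd_pow_self x hn).trans h

theorem one_sub_dvd_one_sub_pow_pow (hn : n ≠ 0) : 1 - x ∣ (1 - x ^ n) ^ n :=
  (one_sub_dvd_one_sub_pow x n).trans (dvd_pow_self _ hn)

theorem sub_sq_dvd_sub_one_sub_one_sub_pow_pow (hn : n ≠ 0) :
    x - x ^ 2 ∣ x - (1 - (1 - x ^ n) ^ n) := by
  rw [show x - x ^ 2 = x * (1 - x) by ring]
  refine IsCoprime.mul_dvd ⟨1, 1, by ring⟩ ?_ ?_
  · rw [show x - (1 - (1 - x ^ n) ^ n) = x + -(1 - (1 - x ^ n) ^ n) by ring]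
    exact dvd_add dvd_rfl ((dvd_one_sub_one_sub_pow_pow x hn).neg_right)
  · rw [show x - (1 - (1 - x ^ n) ^ n) = -(1 - x) + (1 - x ^ n) ^ n by ring]
    exact dvd_add (dvd_neg.2 dvd_rfl) (one_sub_dvd_one_sub_pow_pow x hn)

end CommRing

section

variable {R : Type*} [Ring R]

theorem exists_mul_one_sub_eq_one_of_mem_jacobson {x : R} (hx : x ∈ Ring.jacobson R) :
    ∃ z, z * (1 - x) = 1 := by
  rw [← Ideal.jacobson_bot] at hx
  obtain ⟨z, hz⟩ := Ideal.mem_jacobson_iff.1 hx (-1)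
  exact ⟨z, by linear_combination (norm := noncomm_ring) Ideal.mem_bot.1 hz⟩

theorem isUnit_one_sub_of_mem_jacobson {x : R} (hx : x ∈ Ring.jacobson R) : IsUnit (1 - x) := by
  obtain ⟨z, hz⟩ := exists_mul_one_sub_eq_one_of_mem_jacobson hx
  obtain ⟨w, hw⟩ := exists_mul_one_sub_eq_one_of_mem_jacobson
    ((Ring.jacobson R).neg_mem (Ideal.mul_mem_left _ z hx))
  have hwz : w * z = 1 := by
    rwa [show 1 - -(z * x) = z by linear_combination (norm := noncomm_ring) -hz] at hw
  have hw' : w = 1 - x :=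
    calc w = w * (z * (1 - x)) := by rw [hz, mul_one]
      _ = 1 - x := by rw [← mul_assoc, hwz, one_mul]
  exact ⟨⟨1 - x, z, hw' ▸ hwz, hz⟩, rfl⟩

theorem IsIdempotentElem.eq_zero_of_mem_jacobson {e : R} (he : IsIdempotentElem e)
    (hJ : e ∈ Ring.jacobson R) : e = 0 :=
  (isUnit_one_sub_of_mem_jacobson hJ).mul_left_cancel (by rw [he.one_sub_mul_self, mul_zero])

theorem isUnit_of_isUnit_quotient_mk {I : Ideal R} [I.IsTwoSided] (hI : I ≤ Ring.jacobson R)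
    {x : R} (hx : IsUnit (Ideal.Quotient.mk I x)) : IsUnit x := by
  have hlift (z : R) (hz : Ideal.Quotient.mk I z = 1) : IsUnit z := by
    have hmem : 1 - z ∈ I :=
      Ideal.Quotient.eq_zero_iff_mem.1 (by rw [map_sub, map_one, hz, sub_self])
    simpa using isUnit_one_sub_of_mem_jacobson (hI hmem)
  obtain ⟨y, hy⟩ := Ideal.Quotient.mk_surjective (↑hx.unit⁻¹ : R ⧸ I)
  obtain ⟨v, hv⟩ := hlift (x * y) (by rw [map_mul, hy, IsUnit.mul_val_inv])
  obtain ⟨w, hw⟩ := hlift (y * x) (by rw [map_mul, hy, IsUnit.val_inv_mul])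
  have hr : x * (y * ↑v⁻¹) = 1 := by rw [← mul_assoc, ← hv, Units.mul_inv]
  have hl : ↑w⁻¹ * y * x = 1 := by rw [mul_assoc, ← hw, Units.inv_mul]
  exact ⟨⟨x, y * ↑v⁻¹, hr, left_inv_eq_right_inv hl hr ▸ hl⟩, rfl⟩

theorem exists_isIdempotentElem_of_isNilpotent_sub_sq {a : R} (h : IsNilpotent (a - a ^ 2)) :
    ∃ e : R, IsIdempotentElem e ∧ Commute e a ∧ IsNilpotent (a - e) ∧
      e ∈ Ideal.span {a} ∧ 1 - e ∈ Ideal.span {1 - a} := by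
  obtain ⟨n, hn⟩ := h
  have hN : (a - a ^ 2) ^ (n + 1) = 0 := by rw [pow_succ, hn, zero_mul]
  have hcomm (p q : ℤ[X]) : Commute (aeval a p) (aeval a q) := (Commute.all p q).map _
  obtain ⟨f, hf⟩ := dvd_one_sub_one_sub_pow_pow (X : ℤ[X]) n.succ_ne_zero
  obtain ⟨g, hg⟩ := one_sub_dvd_one_sub_pow_pow (X : ℤ[X]) n.succ_ne_zero
  obtain ⟨k, hk⟩ := sub_sq_dvd_sub_one_sub_one_sub_pow_pow (X : ℤ[X]) n.succ_ne_zero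
  rw [mul_comm] at hf hg
  replace hf := congrArg (aeval a) hf
  replace hg := congrArg (aeval a) hg
  replace hk := congrArg (aeval a) hk
  simp only [map_sub, map_mul, map_pow, map_one, aeval_X] at hf hg hk
  refine ⟨_, isIdempotentElem_one_sub_one_sub_pow_pow a _ hN, ?_, ?_,
    Ideal.mem_span_singleton'.2 ⟨_, hf.symm⟩, ?_⟩
  · have := hcomm (1 - (1 - X ^ (n + 1)) ^ (n + 1)) X
    rwa [map_sub, map_pow, map_sub, map_pow, map_one, aeval_X] at this
  · rw [hk]
    refine Commute.isNilpotent_mul_right ?_ ⟨_, hN⟩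
    have := hcomm (X - X ^ 2) k
    rwa [map_sub, map_pow, aeval_X] at this
  · rw [sub_sub_cancel]
    exact Ideal.mem_span_singleton'.2 ⟨_, hg.symm⟩

theorem isStronglyNilClean_iff_isNilpotent_sub_sq :
    IsStronglyNilClean R ↔ ∀ a : R, IsNilpotent (a - a ^ 2) := by
  refine ⟨fun h a => ?_, fun h a => ?_⟩
  · obtain ⟨e, q, he, hq, rfl, hc⟩ := h a
    have hsplit : e + q - (e + q) ^ 2 = q * (1 - 2 * e - q) := by
      linear_combination (norm := noncomm_ring) -he.eq - hc
    rw [hsplit]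
    refine Commute.isNilpotent_mul_right ?_ hq
    show q * (1 - 2 * e - q) = (1 - 2 * e - q) * q
    linear_combination (norm := noncomm_ring) 2 * hc
  · obtain ⟨e, he, hc, hq, -, -⟩ := exists_isIdempotentElem_of_isNilpotent_sub_sq (h a)
    refine ⟨e, a - e, he, hq, (add_sub_cancel e a).symm, ?_⟩
    rw [mul_sub, sub_mul, hc.eq]

theorem IsStronglyNilClean.isExchange (h : IsStronglyNilClean R) : IsExchange R := fun a =>
  let ⟨e, he, _, _, hea, hea'⟩ :=
    exists_isIdempotentElem_of_isNilpotent_sub_sq (isStronglyNilClean_iff_isNilpotent_sub_sq.1 h a)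
  ⟨e, he, hea, hea'⟩

theorem IsStronglyNilClean.isUU (h : IsStronglyNilClean R) : IsUU R := by
  intro u
  obtain ⟨e, q, he, hq, hu, hc⟩ := h u
  have hqu : Commute (-q) u := by
    rw [hu]
    exact ((Commute.symm hc).add_right (Commute.refl q)).neg_left
  have he1 : e = 1 := by
    refine (IsIdempotentElem.iff_eq_one_of_isUnit ?_).1 he
    rw [eq_sub_of_add_eq hu.symm, sub_eq_add_neg]
    exact hq.neg.isUnit_add_left_of_commute u.isUnit hqu
  rwa [hu, he1, add_sub_cancel_left]

theorem IsStronglyNilClean.isNilpotent_of_mem_jacobson (h : IsStronglyNilClean R) {x : R}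
    (hx : x ∈ Ring.jacobson R) : IsNilpotent x := by
  obtain ⟨e, he, -, hq, hex, -⟩ :=
    exists_isIdempotentElem_of_isNilpotent_sub_sq (isStronglyNilClean_iff_isNilpotent_sub_sq.1 h x)
  rwa [he.eq_zero_of_mem_jacobson ((Ideal.span_singleton_le_iff_mem _).2 hx hex), sub_zero] at hq

theorem IsUU.isUJsharp (h : IsUU R) : IsUJsharp R := by
  intro u
  obtain ⟨n, hn⟩ := h u
  exact ⟨n + 1, Nat.le_add_left 1 n, by rw [pow_succ, hn, zero_mul]; exact zero_mem _⟩

theorem IsUJsharp.isUU (h : IsUJsharp R) (hJ : ∀ x ∈ Ring.jacobson R, IsNilpotent x) :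
    IsUU R := by
  intro u
  obtain ⟨n, -, hn⟩ := h u
  obtain ⟨m, hm⟩ := hJ _ (Ideal.jacobson_bot (R := R) ▸ hn)
  exact ⟨n * m, by rw [pow_mul, hm]⟩

theorem IsUU.quotient (h : IsUU R) {I : Ideal R} [I.IsTwoSided] (hI : I ≤ Ring.jacobson R) :
    IsUU (R ⧸ I) := by
  intro u
  obtain ⟨x, hx⟩ := Ideal.Quotient.mk_surjective (u : R ⧸ I)
  have := (h (isUnit_of_isUnit_quotient_mk hI (hx ▸ u.isUnit)).unit).map (Ideal.Quotient.mk I)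
  rwa [map_sub, map_one, IsUnit.unit_spec, hx] at this

theorem IsUU.eq_zero_of_matrixUnits (h : IsUU R) {a b : R} (ha : a * a = 0) (hb : b * b = 0)
    (haba : a * b * a = a) (hbab : b * a * b = b) : a = 0 := by
  -- `ba, b, a, ab` are `2 × 2` matrix units, and `a + b + ab` is the matrix `[[0, 1], [1, 1]]`
  -- of their corner, whose square is itself plus the corner's identity `ba + ab`.
  have ht : IsNilpotent (a + b + a * b) := by
    have hu : IsUnit ((1 + a) * (1 + b)) :=
      (IsNilpotent.isUnit_one_add ⟨2, by rw [sq, ha]⟩).mul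
        (IsNilpotent.isUnit_one_add ⟨2, by rw [sq, hb]⟩)
    simpa [mul_add, add_mul, add_assoc] using h hu.unit
  have hg : IsIdempotentElem (b * a + a * b) := by
    show _ * _ = _
    linear_combination (norm := noncomm_ring) b * haba + b * ha * b + a * hb * a + a * hbab
  have hg0 : b * a + a * b = 0 := by
    refine hg.eq_zero_of_isNilpotent ?_
    rw [show b * a + a * b = (a + b + a * b) * (a + b + a * b - 1) by
      linear_combination (norm := noncomm_ring)
        -(ha + hb + hbab + haba + ha * b + a * hb + haba * b)]
    exact ((Commute.refl _).sub_right (Commute.one_right _)).isNilpotent_mul_right ht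
  calc a = a * (b * a + a * b) := by linear_combination (norm := noncomm_ring) -haba - ha * b
    _ = 0 := by rw [hg0, mul_zero]

theorem IsUU.eq_zero_of_mem_span_of_mul_self_eq_zero (h : IsUU R) {q e : R} (hq : q * q = 0)
    (he : IsIdempotentElem e) (hmem : e ∈ Ideal.span {q}) : e = 0 := by
  obtain ⟨x, hx⟩ := Ideal.mem_span_singleton'.1 hmem
  have heq : e * q = 0 := by rw [← hx, mul_assoc, hq, mul_zero]
  have hpq : e * x * q = e := by rw [mul_assoc, hx, he.eq]
  have hep : e * (e * x) = e * x := by rw [← mul_assoc, he.eq]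
  have ha : q * e = 0 := by
    refine h.eq_zero_of_matrixUnits (b := e * x - e * x * e) ?_ ?_ ?_ ?_
    · linear_combination (norm := noncomm_ring) q * heq * e
    · linear_combination (norm := noncomm_ring) -(e * x * hep) + e * x * hep * e
    · linear_combination (norm := noncomm_ring)
        q * hep * q * e + q * hpq * e + q * he.eq - q * e * (e * x) * heq * e
    · linear_combination (norm := noncomm_ring)
        hpq * e * (e * x) + he.eq * (e * x) + hep
          - (hpq * e * (e * x) + he.eq * (e * x) + hep) * e
          - e * x * heq * e * (e * x) + e * x * heq * e * (e * x) * e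
  calc e = e * x * q * e := by rw [hpq, he.eq]
    _ = 0 := by rw [mul_assoc, ha, mul_zero]

theorem IsExchange.of_surjective {S : Type*} [Ring S] (h : IsExchange R) (f : R →+* S)
    (hf : Function.Surjective f) : IsExchange S := by
  intro b
  obtain ⟨a, rfl⟩ := hf b
  obtain ⟨e, he, hea, hea'⟩ := h a
  obtain ⟨x, hx⟩ := Ideal.mem_span_singleton'.1 hea
  obtain ⟨y, hy⟩ := Ideal.mem_span_singleton'.1 hea'
  refine ⟨f e, he.map f, Ideal.mem_span_singleton'.2 ⟨f x, ?_⟩,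
    Ideal.mem_span_singleton'.2 ⟨f y, ?_⟩⟩
  · rw [← map_mul, hx]
  · rw [← map_one f, ← map_sub, ← map_mul, hy, map_sub, map_one]

theorem IsExchange.mem_jacobson_of_forall_isIdempotentElem (h : IsExchange R) {q : R}
    (hq : ∀ e ∈ Ideal.span {q}, IsIdempotentElem e → e = 0) : q ∈ Ring.jacobson R := by
  rw [← Ideal.jacobson_bot, Ideal.mem_jacobson_iff]
  intro y
  obtain ⟨e, he, hea, hea'⟩ := h (-(y * q))
  have hle : Ideal.span {-(y * q)} ≤ Ideal.span {q} :=
    (Ideal.span_singleton_le_iff_mem _).2 (by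
      simpa using Ideal.mul_mem_left _ (-y) (Ideal.mem_span_singleton_self q))
  rw [hq e (hle hea) he, sub_zero] at hea'
  obtain ⟨z, hz⟩ := Ideal.mem_span_singleton'.1 hea'
  exact ⟨z, Ideal.mem_bot.2 (by linear_combination (norm := noncomm_ring) hz)⟩

theorem IsExchange.isReduced_of_isUU (h : IsExchange R) (hUU : IsUU R)
    (hJ : Ring.jacobson R = ⊥) : IsReduced R := by
  refine (isReduced_iff_pow_one_lt 2 one_lt_two).2 fun q hq => ?_
  have hmem := h.mem_jacobson_of_forall_isIdempotentElem fun e hmem he =>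
    hUU.eq_zero_of_mem_span_of_mul_self_eq_zero (by rwa [sq] at hq) he hmem
  rwa [hJ, Ideal.mem_bot] at hmem

section IsReduced

variable [IsReduced R]

theorem IsIdempotentElem.commute_of_isReduced {e : R} (he : IsIdempotentElem e) (r : R) :
    Commute e r := by
  have hl : e * r * (1 - e) = 0 := eq_zero_of_pow_eq_zero (n := 2) (by
    linear_combination (norm := noncomm_ring) -(e * r * he.eq * r * (1 - e)))
  have hr : (1 - e) * r * e = 0 := eq_zero_of_pow_eq_zero (n := 2) (by
    linear_combination (norm := noncomm_ring) -((1 - e) * r * he.eq * r * e))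
  show e * r = r * e
  linear_combination (norm := noncomm_ring) hl - hr

theorem mul_eq_one_comm_of_isReduced {x y : R} (h : y * x = 1) : x * y = 1 := by
  have hxy : IsIdempotentElem (x * y) := by
    rw [IsIdempotentElem, mul_assoc, ← mul_assoc y, h, one_mul]
  calc x * y = y * (x * (x * y)) := by rw [← mul_assoc, h, one_mul]
    _ = y * (x * y * x) := by rw [(hxy.commute_of_isReduced x).eq]
    _ = 1 := by rw [mul_assoc, h, mul_one, h]

theorem IsUU.mul_eq_self_of_mem_span (h : IsUU R) {e a : R} (he : IsIdempotentElem e)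
    (hmem : e ∈ Ideal.span {a}) : e * a = e := by
  obtain ⟨x, hx⟩ := Ideal.mem_span_singleton'.1 hmem
  have hex : e * x = x * e := he.commute_of_isReduced x
  have hinv : (e * x + (1 - e)) * (e * a + (1 - e)) = 1 := by
    linear_combination (norm := noncomm_ring)
      -(e * hex * a) + he.eq * x * a + e * hx + 2 * he.eq + e * hex - he.eq * x - he.eq * a
  have hv : e * a + (1 - e) = 1 :=
    sub_eq_zero.1 (h ⟨_, _, mul_eq_one_comm_of_isReduced hinv, hinv⟩).eq_zero
  calc e * a = e * (e * a + (1 - e)) := by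
        linear_combination (norm := noncomm_ring) -(he.eq * a) + he.eq
    _ = e := by rw [hv, mul_one]

theorem IsExchange.isIdempotentElem_of_isUU (h : IsExchange R) (hUU : IsUU R) (a : R) :
    IsIdempotentElem a := by
  obtain ⟨e, he, hea, hea'⟩ := h a
  have h₁ := hUU.mul_eq_self_of_mem_span he hea
  have h₂ := hUU.mul_eq_self_of_mem_span he.one_sub hea'
  rwa [show a = e by linear_combination (norm := noncomm_ring) h₁ - h₂]

end IsReduced

theorem IsExchange.isStronglyNilClean (h : IsExchange R) (hUU : IsUU R)
    (hJ : ∀ x ∈ Ring.jacobson R, IsNilpotent x) : IsStronglyNilClean R := by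
  have hS : IsExchange (R ⧸ Ring.jacobson R) := h.of_surjective _ Ideal.Quotient.mk_surjective
  have hUUS : IsUU (R ⧸ Ring.jacobson R) := hUU.quotient le_rfl
  have := hS.isReduced_of_isUU hUUS (Ring.jacobson_quotient_jacobson R)
  refine isStronglyNilClean_iff_isNilpotent_sub_sq.2 fun a => hJ _ ?_
  rw [← Ideal.Quotient.eq_zero_iff_mem, map_sub, map_pow, sq,
    (hS.isIdempotentElem_of_isUU hUUS _).eq, sub_self]

end

theorem exchange_isUJsharp_nil_iff_stronglyNilClean (R : Type*) [Ring R] :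
    (IsExchange R ∧ IsUJsharp R ∧ ∀ x ∈ Ideal.jacobson (⊥ : Ideal R), IsNilpotent x) ↔
      (∀ a : R, ∃ e q : R, IsIdempotentElem e ∧ IsNilpotent q ∧ a = e + q ∧ e * q = q * e) := by
  change _ ↔ IsStronglyNilClean R
  rw [Ideal.jacobson_bot]
  refine ⟨fun ⟨hEx, hUJ, hJ⟩ => hEx.isStronglyNilClean (hUJ.isUU hJ) hJ, fun h => ?_⟩
  exact ⟨h.isExchange, h.isUU.isUJsharp, fun x => h.isNilpotent_of_mem_jacobson⟩
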